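/- Let wᵢ = (w₁ᵢ, w₂ᵢ, w₃ᵢ) ∈ ℝ₊³ satisfy wᵢ = B(kᵢ)·wᵢ₊₁ for a sequence of positive naturals kᵢ, with w₁ᵢ > w₂ᵢ + w₃ᵢ and w₂ᵢ > w₃ᵢ. Define xᵢ = (w₁ᵢ−w₂ᵢ−w₃ᵢ, w₃ᵢ, w₂ᵢ−w₃ᵢ, w₃ᵢ, w₂ᵢ, w₁ᵢ−w₂ᵢ, w₃ᵢ, w₂ᵢ, w₁ᵢ−w₂ᵢ−w₃ᵢ) ∈ ℝ⁹. Then xᵢ = R(kᵢ)·xᵢ₊₁ for all i ≥ 0. -/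

import Mathlib

open Matrix

/-- The matrix B(k) from the paper, over the reals. -/
def Bmat (k : ℕ) : Matrix (Fin 3) (Fin 3) ℝ := !![(k : ℝ), (k : ℝ), 1; 1, 0, 0; 0, 1, 0]

/-- The 9×9 matrix `R(k)` from the paper. -/
def Rmat (k : ℕ) : Matrix (Fin 9) (Fin 9) ℝ :=
  !![0, (k:ℝ)-1, (k:ℝ)-1, 0, 0, 0, (k:ℝ), (k:ℝ)-1, (k:ℝ)-1;
     0, 0, 0, 0, 0, 0, 0, 1, 0;
     0, 1, 0, 0, 0, 0, 0, 0, 1;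
     0, 0, 1, 0, 0, 0, 1, 0, 0;
     1, 1, 1, 1, 0, 0, 0, 0, 0;
     0, (k:ℝ), (k:ℝ), 0, 0, 0, (k:ℝ), (k:ℝ)-1, (k:ℝ)-1;
     0, 0, 0, 0, 1, 0, 0, 0, 0;
     0, 1, 1, 0, 0, 1, 0, 0, 0;
     (k:ℝ)-1, (k:ℝ)-1, (k:ℝ)-1, (k:ℝ), 0, 0, 0, (k:ℝ)-1, 0]

/-- The 9-vector `xᵢ` attached to a 3-vector `wᵢ`. -/
def embed9 (v : Fin 3 → ℝ) : Fin 9 → ℝ :=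
  ![v 0 - v 1 - v 2, v 2, v 1 - v 2, v 2, v 1, v 0 - v 1, v 2, v 1, v 0 - v 1 - v 2]

lemma Bmat_mulVec (k : ℕ) (v : Fin 3 → ℝ) :
    Bmat k *ᵥ v = ![k * v 0 + k * v 1 + v 2, v 0, v 1] := by
  ext j
  fin_cases j <;> simp [Bmat, mulVec, dotProduct, Fin.sum_univ_three]

lemma embed9_Bmat_mulVec (k : ℕ) (v : Fin 3 → ℝ) :
    embed9 (Bmat k *ᵥ v) = Rmat k *ᵥ embed9 v := by
  rw [Bmat_mulVec]
  ext j
  fin_cases j <;> simp [embed9, Rmat, mulVec, dotProduct, Fin.sum_univ_succ] <;> ring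

theorem stmt14_general (k : ℕ → ℕ)
    (w : ℕ → Fin 3 → ℝ)
    (hrec : ∀ i, w i = (Bmat (k i)).mulVec (w (i + 1)))
    (x : ℕ → Fin 9 → ℝ)
    (hx : ∀ i, x i = ![w i 0 - w i 1 - w i 2, w i 2, w i 1 - w i 2, w i 2, w i 1,
      w i 0 - w i 1, w i 2, w i 1, w i 0 - w i 1 - w i 2]) :
    ∀ i, x i = (Rmat (k i)).mulVec (x (i + 1)) := by
  intro i
  have hx' : ∀ j, x j = embed9 (w j) := hx
  rw [hx', hx', hrec i, embed9_Bmat_mulVec]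

theorem stmt14 (k : ℕ → ℕ) (hk : ∀ i, 1 ≤ k i)
    (w : ℕ → Fin 3 → ℝ) (hw : ∀ i j, 0 < w i j)
    (hrec : ∀ i, w i = (Bmat (k i)).mulVec (w (i + 1)))
    (htri : ∀ i, w i 1 + w i 2 < w i 0) (h23 : ∀ i, w i 2 < w i 1)
    (x : ℕ → Fin 9 → ℝ)
    (hx : ∀ i, x i = ![w i 0 - w i 1 - w i 2, w i 2, w i 1 - w i 2, w i 2, w i 1,
      w i 0 - w i 1, w i 2, w i 1, w i 0 - w i 1 - w i 2]) :
    ∀ i, x i = (Rmat (k i)).mulVec (x (i + 1)) :=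
  stmt14_general k w hrec x hx
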